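/- For every natural number k and every natural number m with m ≤ k, the vector v_{k,m} satisfies H_k · v_{k,m} = (2m − k) · v_{k,m}, i.e., v_{k,m} is an eigenvector of the dimer hopping matrix H_k with eigenvalue 2m − k. Moreover v_{k,m} is nonzero. -/
import Mathlib


open Matrix
open Polynomial Finset

/-- The dimer hopping matrix `H_k` restricted to the `k`-particle subspace:
a `(k+1) × (k+1)` symmetric tridiagonal matrix with off-diagonal entries
`√((α+1)(k−α))`. -/
noncomputable def hopH (k : ℕ) : Matrix (Fin (k+1)) (Fin (k+1)) ℝ :=
  fun α β =>
    if (α : ℕ) + 1 = (β : ℕ) then Real.sqrt ((((α : ℕ) + 1) * (k - (α : ℕ)) : ℕ))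
    else if (β : ℕ) + 1 = (α : ℕ) then Real.sqrt ((((β : ℕ) + 1) * (k - (β : ℕ)) : ℕ))
    else 0

/-- The integer coefficient `S_{k,m}(α) = Σ_{j=0}^{m} (−1)^{k+m+α+j} C(m,j) C(k−m, α−j)`,
with the binomial coefficient taken to be `0` when the lower index is out of range. -/
def Scoef (k m α : ℕ) : ℤ :=
  ∑ j ∈ Finset.range (m+1),
    if j ≤ α then (-1 : ℤ)^(k+m+α+j) * (m.choose j) * ((k-m).choose (α - j)) else 0

/-- The (unnormalized) eigenvector `v_{k,m}(α) = √(α!(k−α)!) · S_{k,m}(α)`. -/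
noncomputable def vvec (k m : ℕ) : Fin (k+1) → ℝ :=
  fun α => Real.sqrt (((α : ℕ).factorial * (k - (α : ℕ)).factorial : ℕ)) * (Scoef k m (α : ℕ) : ℝ)


lemma coeff_one_sub_X_pow (m i : ℕ) : ((1 - X : ℤ[X])^m).coeff i = (-1)^i * m.choose i := by
  have h1 : (1 - X : ℤ[X]) = (-1) * (X + C (-1)) := by rw [C_neg, C_1]; ring
  rw [h1, mul_pow, ← C_1, ← C_neg, ← C_pow, coeff_C_mul, coeff_X_add_C_pow]
  rcases le_or_gt i m with h | h
  · have hs : (-1 : ℤ)^m * (-1)^(m-i) = (-1)^i := by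
      rw [← pow_add]
      have h2 : m + (m - i) = 2*(m-i) + i := by omega
      rw [h2, pow_add, pow_mul]; norm_num
    linear_combination (m.choose i : ℤ) * hs
  · rw [Nat.choose_eq_zero_of_lt h]; push_cast; ring

/-- the polynomial (1-X)^m (1+X)^n -/
noncomputable def Ppoly (m n : ℕ) : ℤ[X] := (1 - X)^m * (1 + X)^n

lemma coeff_Ppoly (m n α : ℕ) :
    (Ppoly m n).coeff α = ∑ j ∈ range (α+1), (-1:ℤ)^j * m.choose j * n.choose (α - j) := by
  rw [Ppoly, coeff_mul, Finset.Nat.sum_antidiagonal_eq_sum_range_succ_mk]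
  refine Finset.sum_congr rfl fun j _ => ?_
  rw [coeff_one_sub_X_pow, coeff_one_add_X_pow, mul_assoc]

lemma deriv_Ppoly (m n : ℕ) :
    (1 - X^2 : ℤ[X]) * derivative (Ppoly m n)
      = (C ((n:ℤ) - m) - C ((m:ℤ)+n) * X) * Ppoly m n := by
  rw [Ppoly, derivative_mul, derivative_pow, derivative_pow]
  rw [derivative_sub, derivative_one, derivative_X, derivative_add, derivative_one, derivative_X]
  rcases m with _ | m <;> rcases n with _ | n <;>
    · simp only [Nat.add_sub_cancel, Nat.zero_sub, Nat.cast_zero, Nat.cast_add, Nat.cast_one,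
        pow_zero, C_0, zero_mul, mul_zero, map_add, map_sub, map_neg, map_natCast, _root_.map_one, C_1]
      ring

lemma Pcoeff_zero_rec (m n : ℕ) :
    (Ppoly m n).coeff 1 = ((n:ℤ) - m) * (Ppoly m n).coeff 0 := by
  have h := congrArg (fun q : ℤ[X] => q.coeff 0) (deriv_Ppoly m n)
  simp only [mul_coeff_zero, coeff_sub, coeff_one, coeff_derivative,
    coeff_C_mul, coeff_C, coeff_X_pow, coeff_X_zero, mul_zero, sub_zero] at h
  norm_num at h
  linarith [h]

lemma Pcoeff_rec (m n a : ℕ) :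
    ((a:ℤ)+2) * (Ppoly m n).coeff (a+2) + ((m:ℤ)+n-a) * (Ppoly m n).coeff a
      = ((n:ℤ) - m) * (Ppoly m n).coeff (a+1) := by
  have h := congrArg (fun q : ℤ[X] => q.coeff (a+1)) (deriv_Ppoly m n)
  rw [sub_mul, sub_mul, coeff_sub, coeff_sub, one_mul, coeff_C_mul] at h
  rw [show (X^2 : ℤ[X]) * derivative (Ppoly m n) = derivative (Ppoly m n) * X^2 from mul_comm _ _] at h
  rw [coeff_mul_X_pow'] at h
  rw [show (C ((m:ℤ)+n) * X * Ppoly m n) = (C ((m:ℤ)+n) * Ppoly m n) * X from by ring] at h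
  rw [coeff_mul_X, coeff_C_mul, coeff_derivative] at h
  -- handle the if in h
  rcases a with _ | a
  · simp only [Nat.zero_eq, show ¬ (2 ≤ 0 + 1) by omega, if_false] at h
    push_cast at h ⊢
    linarith [h]
  · rw [if_pos (by omega : 2 ≤ a + 1 + 1), show a + 1 + 1 - 2 = a from by omega,
      coeff_derivative] at h
    push_cast at h ⊢
    linarith [h]


lemma Scoef_eq (m n α : ℕ) : Scoef (m+n) m α = (-1:ℤ)^(n+α) * (Ppoly m n).coeff α := by
  rw [coeff_Ppoly, Scoef, Finset.mul_sum]
  have key : ∀ j : ℕ, (if j ≤ α then (-1 : ℤ)^((m+n)+m+α+j) * (m.choose j) * (((m+n)-m).choose (α - j)) else 0)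
      = (if j ∈ Finset.range (α+1) then (-1:ℤ)^(n+α) * ((-1)^j * m.choose j * n.choose (α - j)) else 0) := by
    intro j
    have hmn : (m+n) - m = n := by omega
    rw [hmn]
    by_cases hj : j ≤ α
    · rw [if_pos hj, if_pos (Finset.mem_range.mpr (by omega))]
      have : ((m+n)+m+α+j) = 2*m + (n + α) + j := by ring
      rw [this, pow_add, pow_add, pow_mul]
      norm_num; ring
    · rw [if_neg hj, if_neg (by simp [Finset.mem_range]; omega)]
  simp only [key]
  rw [Finset.sum_ite_mem (Finset.range (m+1)) (Finset.range (α+1)) (fun j => (-1:ℤ)^(n+α) * ((-1)^j * m.choose j * n.choose (α - j)))]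
  apply Finset.sum_subset
  · intro x hx; exact (Finset.mem_inter.mp hx).2
  · intro j hj hj2
    have : m < j := by
      simp only [Finset.mem_inter, Finset.mem_range] at hj hj2
      omega
    rw [Nat.choose_eq_zero_of_lt this]
    push_cast; ring

lemma Scoef_zero_rec (k m : ℕ) (hm : m ≤ k) :
    Scoef k m 1 = (2*(m:ℤ) - k) * Scoef k m 0 := by
  obtain ⟨n, rfl⟩ : ∃ n, k = m + n := ⟨k - m, by omega⟩
  rw [Scoef_eq, Scoef_eq, Pcoeff_zero_rec]
  push_cast
  ring

lemma Scoef_rec (k m a : ℕ) (hm : m ≤ k) :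
    ((a:ℤ)+2) * Scoef k m (a+2) + ((k:ℤ)-a) * Scoef k m a
      = (2*(m:ℤ) - k) * Scoef k m (a+1) := by
  obtain ⟨n, rfl⟩ : ∃ n, k = m + n := ⟨k - m, by omega⟩
  rw [Scoef_eq, Scoef_eq, Scoef_eq]
  have h := Pcoeff_rec m n a
  have h2 : (-1:ℤ)^(n+(a+2)) = (-1)^(n+a) := by
    rw [show n+(a+2) = (n+a)+2 from by ring, pow_add]; norm_num
  have h3 : (-1:ℤ)^(n+(a+1)) = -(-1)^(n+a) := by
    rw [show n+(a+1) = (n+a)+1 from by ring, pow_add]; norm_num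
  rw [h2, h3]
  push_cast
  linear_combination ((-1:ℤ)^(n+a)) * h

lemma Scoef_top (k m : ℕ) (hm : m ≤ k) : Scoef k m k = 1 := by
  rw [Scoef, Finset.sum_eq_single m]
  · rw [if_pos hm, Nat.choose_self, Nat.choose_self,
      show k + m + k + m = 2*(k+m) from by ring, pow_mul]
    norm_num
  · intro j hj hjm
    rw [if_pos (by simp [Finset.mem_range] at hj; omega)]
    rw [Nat.choose_eq_zero_of_lt (show k - m < k - j from by
      simp [Finset.mem_range] at hj; omega)]
    push_cast; ring
  · intro h
    exact absurd (Finset.mem_range.mpr (by omega)) h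

lemma Scoef_top_succ (k m : ℕ) (hm : m ≤ k) : Scoef k m (k+1) = 0 := by
  rw [Scoef]
  apply Finset.sum_eq_zero
  intro j hj
  simp only [Finset.mem_range] at hj
  rw [if_pos (by omega)]
  rw [Nat.choose_eq_zero_of_lt (show k - m < k + 1 - j from by omega)]
  push_cast; ring

lemma sqrt_nat_combine (a b c d : ℕ) (h : a * b = c^2 * d) :
    Real.sqrt (a:ℝ) * Real.sqrt (b:ℝ) = (c:ℝ) * Real.sqrt (d:ℝ) := by
  rw [← Real.sqrt_mul (Nat.cast_nonneg a), ← Nat.cast_mul, h]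
  push_cast
  rw [Real.sqrt_mul (by positivity), Real.sqrt_sq (Nat.cast_nonneg c)]

lemma e_up (k α : ℕ) (h : α < k) :
    Real.sqrt ((((α+1) * (k-α)) : ℕ)) * Real.sqrt ((((α+1).factorial * (k-(α+1)).factorial) : ℕ))
      = ((α:ℝ)+1) * Real.sqrt (((α.factorial * (k-α).factorial) : ℕ)) := by
  have := sqrt_nat_combine ((α+1) * (k-α)) ((α+1).factorial * (k-(α+1)).factorial)
    (α+1) (α.factorial * (k-α).factorial) ?_
  · rw [this]; push_cast; ring
  · obtain ⟨b, hb⟩ : ∃ b, k - α = b + 1 := ⟨k-α-1, by omega⟩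
    have h2 : k - (α+1) = b := by omega
    rw [hb, h2, Nat.factorial_succ (α), Nat.factorial_succ b]
    ring

lemma e_down (k α : ℕ) (h1 : 0 < α) (h2 : α ≤ k) :
    Real.sqrt (((((α-1)+1) * (k-(α-1))) : ℕ))
        * Real.sqrt ((((α-1).factorial * (k-(α-1)).factorial) : ℕ))
      = ((k-α+1 : ℕ):ℝ) * Real.sqrt (((α.factorial * (k-α).factorial) : ℕ)) := by
  obtain ⟨c, rfl⟩ : ∃ c, α = c+1 := ⟨α-1, by omega⟩
  obtain ⟨d, hd⟩ : ∃ d, k - c = d + 1 := ⟨k-c-1, by omega⟩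
  have h3 : k - (c+1) = d := by omega
  apply sqrt_nat_combine
  simp only [Nat.add_sub_cancel, hd, h3, Nat.factorial_succ]
  ring

/-- `v_{k,m}` is a nonzero eigenvector of `H_k` with eigenvalue `2m − k`. -/
theorem hopH_mulVec_vvec (k m : ℕ) (hm : m ≤ k) :
    hopH k *ᵥ vvec k m = ((2 * (m : ℝ) - (k : ℝ)) • vvec k m) ∧ vvec k m ≠ 0 := by
  constructor
  · funext α
    rw [Matrix.mulVec, dotProduct, Pi.smul_apply, smul_eq_mul]
    have hsum : ∀ β : Fin (k+1), hopH k α β * vvec k m β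
        = (if (α:ℕ)+1 = (β:ℕ) then Real.sqrt (((((α:ℕ))+1) * (k - (α:ℕ)) : ℕ)) * vvec k m β else 0)
          + (if (β:ℕ)+1 = (α:ℕ) then Real.sqrt (((((β:ℕ))+1) * (k - (β:ℕ)) : ℕ)) * vvec k m β else 0) := by
      intro β
      rw [hopH]
      by_cases h1 : (α:ℕ)+1 = (β:ℕ)
      · rw [if_pos h1, if_pos h1, if_neg (by omega)]; ring
      · rw [if_neg h1, if_neg h1]
        by_cases h2 : (β:ℕ)+1 = (α:ℕ)
        · rw [if_pos h2, if_pos h2]; ring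
        · rw [if_neg h2, if_neg h2]; ring
    rw [Finset.sum_congr rfl (fun β _ => hsum β), Finset.sum_add_distrib]
    rcases Nat.lt_or_ge (α:ℕ) k with hlt | hge
    · -- α < k : the up-term is present
      have hsum1 : (∑ β : Fin (k+1), if (α:ℕ)+1 = (β:ℕ)
            then Real.sqrt (((((α:ℕ))+1) * (k - (α:ℕ)) : ℕ)) * vvec k m β else 0)
          = Real.sqrt (((((α:ℕ))+1) * (k - (α:ℕ)) : ℕ)) * vvec k m ⟨(α:ℕ)+1, by omega⟩ := by
        rw [Finset.sum_eq_single (⟨(α:ℕ)+1, by omega⟩ : Fin (k+1))]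
        · rw [if_pos rfl]
        · intro β _ hβ
          exact if_neg (fun hc => hβ (Fin.ext hc.symm))
        · intro h; exact absurd (Finset.mem_univ _) h
      rw [hsum1]
      rcases Nat.eq_zero_or_pos (α:ℕ) with h0 | hpos
      · -- α = 0 < k
        have hsum2 : (∑ β : Fin (k+1), if (β:ℕ)+1 = (α:ℕ)
              then Real.sqrt (((((β:ℕ))+1) * (k - (β:ℕ)) : ℕ)) * vvec k m β else 0) = 0 :=
          Finset.sum_eq_zero fun β _ => if_neg (by omega)
        rw [hsum2, add_zero]
        simp only [vvec, Fin.val_mk]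
        rw [← mul_assoc, e_up k (α:ℕ) hlt, h0]
        have hR := congrArg (fun z : ℤ => (z : ℝ)) (Scoef_zero_rec k m hm)
        push_cast at hR
        simp only [Nat.factorial_zero, Nat.sub_zero, one_mul, zero_add, Nat.cast_zero]
        linear_combination Real.sqrt ((k.factorial : ℕ) : ℝ) * hR
      · -- 0 < α < k
        have hsum2 : (∑ β : Fin (k+1), if (β:ℕ)+1 = (α:ℕ)
              then Real.sqrt (((((β:ℕ))+1) * (k - (β:ℕ)) : ℕ)) * vvec k m β else 0)
            = Real.sqrt ((((((α:ℕ)-1))+1) * (k - ((α:ℕ)-1)) : ℕ)) * vvec k m ⟨(α:ℕ)-1, by omega⟩ := by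
          rw [Finset.sum_eq_single (⟨(α:ℕ)-1, by omega⟩ : Fin (k+1))]
          · rw [if_pos (show (α:ℕ)-1+1 = (α:ℕ) from by omega)]
          · intro β _ hβ
            refine if_neg fun hc => hβ ?_
            apply Fin.ext
            simp only [Fin.val_mk]
            omega
          · intro h; exact absurd (Finset.mem_univ _) h
        rw [hsum2]
        simp only [vvec, Fin.val_mk]
        rw [← mul_assoc, e_up k (α:ℕ) hlt, ← mul_assoc, e_down k (α:ℕ) hpos hlt.le]
        have hrec := Scoef_rec k m ((α:ℕ)-1) hm
        rw [show (α:ℕ)-1+2 = (α:ℕ)+1 from by omega, show (α:ℕ)-1+1 = (α:ℕ) from by omega] at hrec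
        have hR := congrArg (fun z : ℤ => (z : ℝ)) hrec
        push_cast [Nat.cast_sub (show 1 ≤ (α:ℕ) from hpos), Nat.cast_sub hlt.le] at hR
        push_cast [Nat.cast_sub (show 1 ≤ (α:ℕ) from hpos), Nat.cast_sub hlt.le]
        linear_combination Real.sqrt ((((α:ℕ).factorial : ℕ) : ℝ) * (((k-(α:ℕ)).factorial : ℕ) : ℝ)) * hR
    · -- α = k
      have hαk : (α:ℕ) = k := by have := α.isLt; omega
      have hsum1 : (∑ β : Fin (k+1), if (α:ℕ)+1 = (β:ℕ)
            then Real.sqrt (((((α:ℕ))+1) * (k - (α:ℕ)) : ℕ)) * vvec k m β else 0) = 0 :=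
        Finset.sum_eq_zero fun β _ => if_neg (by have := β.isLt; omega)
      rw [hsum1, zero_add]
      rcases Nat.eq_zero_or_pos (α:ℕ) with h0 | hpos
      · -- k = 0
        have hk0 : k = 0 := by omega
        have hm0 : m = 0 := by omega
        have hsum2 : (∑ β : Fin (k+1), if (β:ℕ)+1 = (α:ℕ)
              then Real.sqrt (((((β:ℕ))+1) * (k - (β:ℕ)) : ℕ)) * vvec k m β else 0) = 0 :=
          Finset.sum_eq_zero fun β _ => if_neg (by omega)
        rw [hsum2, show (2*(m:ℝ) - (k:ℝ)) = 0 from by rw [hm0, hk0]; norm_num, zero_mul]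
      · -- 0 < α = k
        have hsum2 : (∑ β : Fin (k+1), if (β:ℕ)+1 = (α:ℕ)
              then Real.sqrt (((((β:ℕ))+1) * (k - (β:ℕ)) : ℕ)) * vvec k m β else 0)
            = Real.sqrt ((((((α:ℕ)-1))+1) * (k - ((α:ℕ)-1)) : ℕ)) * vvec k m ⟨(α:ℕ)-1, by omega⟩ := by
          rw [Finset.sum_eq_single (⟨(α:ℕ)-1, by omega⟩ : Fin (k+1))]
          · rw [if_pos (show (α:ℕ)-1+1 = (α:ℕ) from by omega)]
          · intro β _ hβ
            refine if_neg fun hc => hβ ?_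
            apply Fin.ext
            simp only [Fin.val_mk]
            omega
          · intro h; exact absurd (Finset.mem_univ _) h
        rw [hsum2]
        simp only [vvec, Fin.val_mk]
        rw [← mul_assoc, e_down k (α:ℕ) hpos (by omega)]
        have hrec := Scoef_rec k m ((α:ℕ)-1) hm
        rw [show (α:ℕ)-1+2 = (α:ℕ)+1 from by omega, show (α:ℕ)-1+1 = (α:ℕ) from by omega,
          show (α:ℕ)+1 = k+1 from by omega, Scoef_top_succ k m hm] at hrec
        have hR := congrArg (fun z : ℤ => (z : ℝ)) hrec
        push_cast [Nat.cast_sub (show 1 ≤ (α:ℕ) from hpos), Nat.cast_sub (show (α:ℕ) ≤ k from by omega)] at hR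
        push_cast [Nat.cast_sub (show 1 ≤ (α:ℕ) from hpos), Nat.cast_sub (show (α:ℕ) ≤ k from by omega)]
        linear_combination Real.sqrt ((((α:ℕ).factorial : ℕ) : ℝ) * (((k-(α:ℕ)).factorial : ℕ) : ℝ)) * hR
  · -- nonzero
    intro hzero
    have h := congrFun hzero ⟨k, by omega⟩
    simp only [vvec, Fin.val_mk, Pi.zero_apply] at h
    rw [Scoef_top k m hm] at h
    have hpos : (0:ℝ) < Real.sqrt ((k.factorial * (k-k).factorial : ℕ)) := by
      apply Real.sqrt_pos.mpr
      have : 0 < k.factorial * (k-k).factorial := Nat.mul_pos k.factorial_pos (k-k).factorial_pos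
      exact_mod_cast this
    rw [Int.cast_one, mul_one] at h
    linarith
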